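/- arXiv:1507.04875 — 4 statements merged into one kernel-verified Lean document; each statement's English description precedes it below -/
import Mathlib

section
/- Let B be a uniform Q_p-Banach algebra with spectral norm |·| and unit ball B°. For an integer s ≥ 0, any element b of B°× of the form b = ω·u with ω ∈ μ_{p-1} ⊆ Z_p× a (p-1)-st root of unity and u ∈ 1 + pZ_p + p^{s+1}B°, satisfies log(u)/log(1+p) ∈ Z_p + p^s B°. -/
/-!
On the ball `‖x - 1‖ ≤ p⁻¹` of an ultrametric `ℚ_p`-Banach algebra the logarithm is
1-Lipschitz: the `n`-th coefficient has norm `‖1/n‖ ≤ p ^ (n - 1)`, while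
`‖Xⁿ - Yⁿ‖ ≤ p ^ (-(n - 1)) ‖X - Y‖` for `‖X‖, ‖Y‖ ≤ p⁻¹`. Hence `log u` lies within
`‖b‖ ≤ p^{-s-1}` of `log (1 + pt) ∈ ℚ_p`, which has norm at most `p⁻¹`. For odd `p`,
`log (1 + p) ≡ p mod p²` has norm exactly `p⁻¹`, so dividing by it sends `log (1 + pt)`
into `ℤ_p` and the error into the ball of radius `p^{-s}`.
-/

noncomputable def plog (p : ℕ) [Fact p.Prime] (B : Type*) [NormedCommRing B]
    [NormedAlgebra ℚ_[p] B] (x : B) : B :=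
  ∑' n : ℕ, ((-1 : ℚ_[p]) ^ (n + 1) * ((n : ℚ_[p]))⁻¹) • (x - 1) ^ n

theorem Padic.norm_natCast_inv {p : ℕ} [Fact p.Prime] {n : ℕ} (hn : n ≠ 0) :
    ‖(n : ℚ_[p])⁻¹‖ = (p : ℝ) ^ padicValNat p n := by
  rw [norm_inv, Padic.norm_eq_zpow_neg_valuation (Nat.cast_ne_zero.mpr hn),
    Padic.valuation_natCast, zpow_neg, inv_inv, zpow_natCast]

theorem padicValNat_add_two_le {p n : ℕ} [Fact p.Prime] (hp : p ≠ 2) (hn : 2 ≤ n) :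
    padicValNat p n + 2 ≤ n := by
  set v := padicValNat p n
  rcases Nat.eq_zero_or_pos v with hv | hv
  · omega
  have h3p : 3 ≤ p := (Fact.out : p.Prime).two_le.lt_of_ne' hp
  have hbernoulli : 1 + v * 2 ≤ 3 ^ v := by
    have := one_add_mul_le_pow (a := (2 : ℤ)) (by norm_num) v
    norm_num at this
    exact_mod_cast this
  have : 3 ^ v ≤ n :=
    (Nat.pow_le_pow_left h3p v).trans (Nat.le_of_dvd (by omega) pow_padicValNat_dvd)
  omega

theorem IsUltrametricDist.norm_pow_sub_pow_le {R : Type*} [SeminormedCommRing R] [NormOneClass R]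
    [IsUltrametricDist R] {x y : R} {r : ℝ} (hx : ‖x‖ ≤ r) (hy : ‖y‖ ≤ r) (n : ℕ) :
    ‖x ^ n - y ^ n‖ ≤ r ^ (n - 1) * ‖x - y‖ := by
  have hr : 0 ≤ r := (norm_nonneg x).trans hx
  rw [← geom_sum₂_mul]
  refine (norm_mul_le _ _).trans (mul_le_mul_of_nonneg_right ?_ (norm_nonneg _))
  refine norm_sum_le_of_forall_le_of_nonneg (pow_nonneg hr _) fun i hi => ?_
  have hi : i + (n - 1 - i) = n - 1 := by have := Finset.mem_range.mp hi; omega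
  calc ‖x ^ i * y ^ (n - 1 - i)‖ ≤ ‖x ^ i‖ * ‖y ^ (n - 1 - i)‖ := norm_mul_le _ _
    _ ≤ ‖x‖ ^ i * ‖y‖ ^ (n - 1 - i) := by gcongr <;> exact _root_.norm_pow_le _ _
    _ ≤ r ^ i * r ^ (n - 1 - i) := by gcongr
    _ = r ^ (n - 1) := by rw [← pow_add, hi]

theorem exists_algebraMap_mul_padicInt_add_eq {p : ℕ} [Fact p.Prime] {B : Type*}
    [SeminormedRing B] [NormedAlgebra ℚ_[p] B] {L α : ℚ_[p]} (hL : L ≠ 0)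
    (hα : ‖α‖ ≤ ‖L‖) (d : B) :
    ∃ (z : ℤ_[p]) (c : B), ‖c‖ = ‖d‖ / ‖L‖ ∧
      algebraMap ℚ_[p] B α + d =
        algebraMap ℚ_[p] B L * (algebraMap ℚ_[p] B (z : ℚ_[p]) + c) := by
  have hz : ‖α / L‖ ≤ 1 := by
    rw [norm_div]; exact div_le_one_of_le₀ hα (norm_nonneg _)
  refine ⟨⟨α / L, hz⟩, L⁻¹ • d, by rw [norm_smul, norm_inv, inv_mul_eq_div], ?_⟩
  rw [Algebra.smul_def, mul_add, ← mul_assoc, ← map_mul, ← map_mul, Subtype.coe_mk,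
    mul_div_cancel₀ _ hL, mul_inv_cancel₀ hL, map_one, one_mul]

section PLog

variable {p : ℕ} [Fact p.Prime]

variable (p) in
noncomputable def plogCoeff (n : ℕ) : ℚ_[p] :=
  (-1 : ℚ_[p]) ^ (n + 1) * ((n : ℚ_[p]))⁻¹

theorem plog_eq_tsum (B : Type*) [NormedCommRing B] [NormedAlgebra ℚ_[p] B] (x : B) :
    plog p B x = ∑' n, plogCoeff p n • (x - 1) ^ n := rfl

@[simp]
theorem plogCoeff_zero : plogCoeff p 0 = 0 := by simp [plogCoeff]

@[simp]
theorem plogCoeff_one : plogCoeff p 1 = 1 := by norm_num [plogCoeff]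

theorem norm_plogCoeff {n : ℕ} (hn : n ≠ 0) :
    ‖plogCoeff p n‖ = (p : ℝ) ^ padicValNat p n := by
  rw [plogCoeff, norm_mul, norm_pow, norm_neg, norm_one, one_pow, one_mul,
    Padic.norm_natCast_inv hn]

theorem norm_plogCoeff_le_natCast (n : ℕ) : ‖plogCoeff p n‖ ≤ n := by
  rcases eq_or_ne n 0 with rfl | hn
  · simp
  rw [norm_plogCoeff hn]
  exact_mod_cast Nat.le_of_dvd (Nat.pos_of_ne_zero hn) pow_padicValNat_dvd

theorem norm_plogCoeff_le_pow {n k : ℕ} (h : n ≠ 0 → padicValNat p n ≤ k) :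
    ‖plogCoeff p n‖ ≤ (p : ℝ) ^ k := by
  rcases eq_or_ne n 0 with rfl | hn
  · simp
  rw [norm_plogCoeff hn]
  exact pow_le_pow_right₀ (by exact_mod_cast (Fact.out : p.Prime).one_le) (h hn)

theorem norm_plogCoeff_le_pow_pred (n : ℕ) : ‖plogCoeff p n‖ ≤ (p : ℝ) ^ (n - 1) :=
  norm_plogCoeff_le_pow fun hn => Nat.le_sub_one_of_lt (Nat.padicValNat_lt_self hn)

theorem norm_plogCoeff_le_pow_sub_two (hp : p ≠ 2) {n : ℕ} (hn : 2 ≤ n) :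
    ‖plogCoeff p n‖ ≤ (p : ℝ) ^ (n - 2) :=
  norm_plogCoeff_le_pow fun _ => Nat.le_sub_of_add_le (padicValNat_add_two_le hp hn)

theorem natCast_prime_pos : (0 : ℝ) < p :=
  Nat.cast_pos.mpr (Fact.out : p.Prime).pos

theorem inv_prime_lt_one : (p : ℝ)⁻¹ < 1 :=
  Padic.norm_p (p := p) ▸ Padic.norm_p_lt_one

section Algebra

variable {B : Type*} [NormedCommRing B] [NormedAlgebra ℚ_[p] B]

theorem summable_plogCoeff_smul_pow [NormOneClass B] [CompleteSpace B] {x : B} (hx : ‖x‖ < 1) :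
    Summable fun n => plogCoeff p n • x ^ n := by
  refine Summable.of_norm_bounded
    (summable_pow_mul_geometric_of_norm_lt_one 1 (r := ‖x‖) (by rwa [norm_norm]))
    fun n => ?_
  calc ‖plogCoeff p n • x ^ n‖ ≤ ‖plogCoeff p n‖ * ‖x‖ ^ n :=
        (norm_smul_le _ _).trans (mul_le_mul_of_nonneg_left (norm_pow_le _ _) (norm_nonneg _))
    _ ≤ (n : ℝ) ^ 1 * ‖x‖ ^ n := by
        rw [pow_one]
        exact mul_le_mul_of_nonneg_right (norm_plogCoeff_le_natCast n) (by positivity)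

@[simp]
theorem plog_one : plog p B 1 = 0 := by
  have h : ∀ n, plogCoeff p n • ((1 : B) - 1) ^ n = 0 := by rintro (_ | n) <;> simp
  simp only [plog_eq_tsum, h, tsum_zero]

theorem algebraMap_plog {x : ℚ_[p]} (hx : ‖x - 1‖ < 1) :
    algebraMap ℚ_[p] B (plog p ℚ_[p] x) = plog p B (algebraMap ℚ_[p] B x) := by
  rw [plog_eq_tsum, plog_eq_tsum, ← algebraMapCLM_apply (R := ℚ_[p]),
    (algebraMapCLM ℚ_[p] B).map_tsum (summable_plogCoeff_smul_pow hx)]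
  simp [map_sub, Algebra.smul_def]

variable [NormOneClass B] [CompleteSpace B] [IsUltrametricDist B]

theorem norm_plog_sub_plog_le {x y : B} (hx : ‖x - 1‖ ≤ (p : ℝ)⁻¹)
    (hy : ‖y - 1‖ ≤ (p : ℝ)⁻¹) :
    ‖plog p B x - plog p B y‖ ≤ ‖x - y‖ := by
  rw [plog_eq_tsum, plog_eq_tsum,
    ← (summable_plogCoeff_smul_pow (hx.trans_lt inv_prime_lt_one)).tsum_sub
      (summable_plogCoeff_smul_pow (hy.trans_lt inv_prime_lt_one))]
  refine IsUltrametricDist.norm_tsum_le_of_forall_le_of_nonneg (norm_nonneg _) fun n => ?_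
  have hpow := IsUltrametricDist.norm_pow_sub_pow_le hx hy n
  rw [sub_sub_sub_cancel_right] at hpow
  calc ‖plogCoeff p n • (x - 1) ^ n - plogCoeff p n • (y - 1) ^ n‖
      ≤ ‖plogCoeff p n‖ * ‖(x - 1) ^ n - (y - 1) ^ n‖ := by
        rw [← smul_sub]; exact norm_smul_le _ _
    _ ≤ (p : ℝ) ^ (n - 1) * ((p : ℝ)⁻¹ ^ (n - 1) * ‖x - y‖) :=
        mul_le_mul (norm_plogCoeff_le_pow_pred n) hpow (norm_nonneg _) (by positivity)
    _ = ‖x - y‖ := by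
        rw [← mul_assoc, ← mul_pow, mul_inv_cancel₀ natCast_prime_pos.ne', one_pow, one_mul]

theorem norm_plog_le {x : B} (hx : ‖x - 1‖ ≤ (p : ℝ)⁻¹) :
    ‖plog p B x‖ ≤ ‖x - 1‖ := by
  simpa using norm_plog_sub_plog_le (y := 1) hx (by simp)

theorem norm_plog_sub_algebraMap_plog_le {y : ℚ_[p]} {b : B} (hy : ‖y‖ ≤ (p : ℝ)⁻¹)
    (hb : ‖b‖ ≤ (p : ℝ)⁻¹) :
    ‖plog p B (1 + algebraMap ℚ_[p] B y + b) -
        algebraMap ℚ_[p] B (plog p ℚ_[p] (1 + y))‖ ≤ ‖b‖ := by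
  have hy' : ‖algebraMap ℚ_[p] B y‖ ≤ (p : ℝ)⁻¹ := by rwa [norm_algebraMap']
  have hx : ‖1 + algebraMap ℚ_[p] B y + b - 1‖ ≤ (p : ℝ)⁻¹ := by
    rw [add_assoc, add_sub_cancel_left]
    exact (IsUltrametricDist.norm_add_le_max _ _).trans (max_le hy' hb)
  rw [algebraMap_plog (by simpa using hy.trans_lt inv_prime_lt_one), map_add, map_one]
  simpa using
    norm_plog_sub_plog_le (y := 1 + algebraMap ℚ_[p] B y) hx (by rwa [add_sub_cancel_left])

theorem norm_plog_one_add_sub_self_le (hp : p ≠ 2) {x : B} (hx : ‖x‖ ≤ (p : ℝ)⁻¹) :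
    ‖plog p B (1 + x) - x‖ ≤ ‖x‖ ^ 2 := by
  have hpx : (p : ℝ) * ‖x‖ ≤ 1 :=
    calc (p : ℝ) * ‖x‖ ≤ p * (p : ℝ)⁻¹ := by gcongr
      _ = 1 := mul_inv_cancel₀ natCast_prime_pos.ne'
  rw [plog_eq_tsum, add_sub_cancel_left,
    (summable_plogCoeff_smul_pow (hx.trans_lt inv_prime_lt_one)).tsum_eq_add_tsum_ite 1,
    plogCoeff_one, one_smul, pow_one, add_sub_cancel_left]
  refine IsUltrametricDist.norm_tsum_le_of_forall_le_of_nonneg (by positivity) fun n => ?_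
  rcases n with _ | _ | n
  · simp
  · simp
  rw [if_neg (by omega)]
  calc ‖plogCoeff p (n + 2) • x ^ (n + 2)‖
      ≤ ‖plogCoeff p (n + 2)‖ * ‖x‖ ^ (n + 2) :=
        (norm_smul_le _ _).trans (mul_le_mul_of_nonneg_left (norm_pow_le _ _) (norm_nonneg _))
    _ ≤ (p : ℝ) ^ n * ‖x‖ ^ (n + 2) :=
        mul_le_mul_of_nonneg_right (norm_plogCoeff_le_pow_sub_two hp (by omega)) (by positivity)
    _ = ((p : ℝ) * ‖x‖) ^ n * ‖x‖ ^ 2 := by ring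
    _ ≤ ‖x‖ ^ 2 := mul_le_of_le_one_left (by positivity) (pow_le_one₀ (by positivity) hpx)

end Algebra

theorem norm_plog_one_add_prime (hp : p ≠ 2) : ‖plog p ℚ_[p] (1 + p)‖ = (p : ℝ)⁻¹ := by
  have h := norm_plog_one_add_sub_self_le hp (Padic.norm_p (p := p)).le
  rw [Padic.norm_p] at h
  rw [← Padic.norm_p (p := p)]
  refine Padic.norm_eq_of_norm_sub_lt_right (h.trans_lt ?_)
  rw [Padic.norm_p]
  exact pow_lt_self_of_lt_one₀ (inv_pos.mpr natCast_prime_pos) inv_prime_lt_one one_lt_two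

end PLog

theorem log_div_log_one_add_p_mem_general (p : ℕ) [Fact p.Prime] (hp : p ≠ 2)
    (B : Type*) [NormedCommRing B] [NormedAlgebra ℚ_[p] B] [CompleteSpace B]
    [IsUltrametricDist B]
    -- the norm of `B` is the spectral (power-multiplicative) norm:
    (huniform : ∀ (x : B) (n : ℕ), ‖x ^ n‖ = ‖x‖ ^ n)
    (s : ℕ) (u : B)
    -- `u ∈ 1 + pℤ_p + p^{s+1}B°`:
    (t : ℤ_[p]) (b : B) (hb : ‖b‖ ≤ (p : ℝ) ^ (-(s + 1 : ℤ)))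
    (hu : u = 1 + algebraMap ℚ_[p] B ((p : ℚ_[p]) * (t : ℚ_[p])) + b) :
    -- `log(u)/log(1+p) ∈ ℤ_p + p^s B°`:
    ∃ (z : ℤ_[p]) (c : B), ‖c‖ ≤ (p : ℝ) ^ (-(s : ℤ)) ∧
      plog p B u =
        algebraMap ℚ_[p] B (plog p ℚ_[p] (1 + (p : ℚ_[p]))) *
          (algebraMap ℚ_[p] B ((z : ℚ_[p])) + c) := by
  have : NormOneClass B := ⟨by simpa using huniform 1 0⟩
  set L := plog p ℚ_[p] (1 + p)
  set α := plog p ℚ_[p] (1 + p * t)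
  have hL : ‖L‖ = (p : ℝ)⁻¹ := norm_plog_one_add_prime hp
  have hpt : ‖(p : ℚ_[p]) * t‖ ≤ (p : ℝ)⁻¹ := by
    rw [norm_mul, Padic.norm_p]
    exact mul_le_of_le_one_right (by positivity) t.norm_le_one
  have hα : ‖α‖ ≤ ‖L‖ :=
    hL ▸ (norm_plog_le (by simpa using hpt)).trans (by simpa using hpt)
  have hb' : ‖b‖ ≤ (p : ℝ)⁻¹ :=
    hb.trans <| (zpow_le_zpow_right₀ (mod_cast (Fact.out : p.Prime).one_le) (by omega)).trans_eq
      (zpow_neg_one _)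
  have hd : ‖plog p B u - algebraMap ℚ_[p] B α‖ ≤ (p : ℝ) ^ (-(s + 1 : ℤ)) :=
    (hu ▸ norm_plog_sub_algebraMap_plog_le hpt hb').trans hb
  obtain ⟨z, c, hc, hzc⟩ := exists_algebraMap_mul_padicInt_add_eq
    (norm_ne_zero_iff.mp (hL ▸ inv_ne_zero natCast_prime_pos.ne')) hα
    (plog p B u - algebraMap ℚ_[p] B α)
  refine ⟨z, c, ?_, by rw [← hzc, add_sub_cancel]⟩
  calc ‖c‖ ≤ (p : ℝ) ^ (-(s + 1 : ℤ)) / (p : ℝ)⁻¹ := by rw [hc, hL]; gcongr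
    _ = (p : ℝ) ^ (-(s : ℤ)) := by
        rw [div_inv_eq_mul, ← zpow_add_one₀ natCast_prime_pos.ne']; congr 1; ring

theorem log_div_log_one_add_p_mem (p : ℕ) [Fact p.Prime] (hp : p ≠ 2)
    (B : Type*) [NormedCommRing B] [NormedAlgebra ℚ_[p] B] [CompleteSpace B]
    [IsUltrametricDist B]
    -- the norm of `B` is the spectral (power-multiplicative) norm:
    (huniform : ∀ (x : B) (n : ℕ), ‖x ^ n‖ = ‖x‖ ^ n)
    (s : ℕ) (u : B) (hu_unit : IsUnit u)
    -- `u ∈ 1 + pℤ_p + p^{s+1}B°`: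
    (t : ℤ_[p]) (b : B) (hb : ‖b‖ ≤ (p : ℝ) ^ (-(s + 1 : ℤ)))
    (hu : u = 1 + algebraMap ℚ_[p] B ((p : ℚ_[p]) * (t : ℚ_[p])) + b) :
    -- `log(u)/log(1+p) ∈ ℤ_p + p^s B°`:
    ∃ (z : ℤ_[p]) (c : B), ‖c‖ ≤ (p : ℝ) ^ (-(s : ℤ)) ∧
      plog p B u =
        algebraMap ℚ_[p] B (plog p ℚ_[p] (1 + (p : ℚ_[p]))) *
          (algebraMap ℚ_[p] B ((z : ℚ_[p])) + c) :=
  log_div_log_one_add_p_mem_general p hp B huniform s u t b hb hu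
end

section
/- Let M be a profinite flat O-module with pseudobasis indexed by a set I, and let X be any O-module. Then the completed tensor product X ⊗̂ M := lim_i (X ⊗_O M/I_i), where (I_i) runs through a cofinal system of open O-submodules of M, is naturally isomorphic to the product ∏_{i∈I} X̂, where X̂ denotes the ϖ-adic completion of X. -/
open TensorProduct Classical

/-- The cofinal family of open submodules `M_{J,n} = ∏_{i∈J} ϖ^n O × ∏_{i∉J} O` of the
profinite flat `O`-module `M = ∏_{i∈I} O` (with pseudobasis indexed by `I`). -/
noncomputable def MJn (O : Type*) [CommRing O] (ϖ : O) (I : Type*) (q : Finset I × ℕ) :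
    Submodule O (I → O) :=
  Submodule.pi Set.univ fun i => if i ∈ q.1 then (Ideal.span {ϖ} ^ q.2 : Ideal O) else ⊤

theorem MJn_antitone (O : Type*) [CommRing O] (ϖ : O) (I : Type*) {q q' : Finset I × ℕ}
    (h : q ≤ q') : MJn O ϖ I q' ≤ MJn O ϖ I q := by
  intro m hm
  rw [MJn, Submodule.mem_pi] at hm ⊢
  intro i hi
  by_cases hiq : i ∈ q.1
  · have hiq' : i ∈ q'.1 := h.1 hiq
    have h1 := hm i hi
    rw [if_pos hiq'] at h1
    rw [if_pos hiq]
    exact Ideal.pow_le_pow_right h.2 h1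
  · rw [if_neg hiq]
    trivial

/-- Transition maps `X ⊗ M/M_{J',n'} → X ⊗ M/M_{J,n}` of the inverse system defining the
completed tensor product `X ⊗̂ M`. -/
noncomputable def ctransition (O : Type*) [CommRing O] (ϖ : O) (I : Type*)
    (X : Type*) [AddCommGroup X] [Module O X] {q q' : Finset I × ℕ} (h : q ≤ q') :
    X ⊗[O] ((I → O) ⧸ MJn O ϖ I q') →ₗ[O] X ⊗[O] ((I → O) ⧸ MJn O ϖ I q) :=
  LinearMap.lTensor X
    (Submodule.mapQ (MJn O ϖ I q') (MJn O ϖ I q) LinearMap.id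
      (fun _ hx => MJn_antitone O ϖ I h hx))

/-- The completed tensor product `X ⊗̂ M = lim_{(J,n)} (X ⊗_O M/M_{J,n})` of an `O`-module `X`
with the profinite flat module `M = ∏_{i∈I} O`, as the inverse limit (submodule of compatible
families). -/
noncomputable def CompletedTensor (O : Type*) [CommRing O] (ϖ : O) (I : Type*) (X : Type*)
    [AddCommGroup X] [Module O X] :
    Submodule O (∀ q : Finset I × ℕ, X ⊗[O] ((I → O) ⧸ MJn O ϖ I q)) where
  carrier := {v | ∀ (q q' : Finset I × ℕ) (h : q ≤ q'), ctransition O ϖ I X h (v q') = v q}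
  add_mem' := by
    intro a b ha hb q q' h
    simp only [Pi.add_apply, map_add, ha q q' h, hb q q' h]
  zero_mem' := by
    intro q q' h
    simp
  smul_mem' := by
    intro c v hv q q' h
    simp only [Pi.smul_apply, map_smul, hv q q' h]

/-- Functoriality of `X ↦ X ⊗̂ M` in `X`. -/
noncomputable def ctensorMap (O : Type*) [CommRing O] (ϖ : O) (I : Type*) {X Y : Type*}
    [AddCommGroup X] [Module O X] [AddCommGroup Y] [Module O Y] (f : X →ₗ[O] Y) :
    CompletedTensor O ϖ I X →ₗ[O] CompletedTensor O ϖ I Y where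
  toFun v := ⟨fun q => LinearMap.rTensor ((I → O) ⧸ MJn O ϖ I q) f (v.1 q), by
    intro q q' h
    have h1 : (ctransition O ϖ I Y h).comp
          (LinearMap.rTensor ((I → O) ⧸ MJn O ϖ I q') f)
        = (LinearMap.rTensor ((I → O) ⧸ MJn O ϖ I q) f).comp (ctransition O ϖ I X h) := by
      unfold ctransition
      rw [LinearMap.lTensor_comp_rTensor, LinearMap.rTensor_comp_lTensor]
    have h2 := LinearMap.congr_fun h1 (v.1 q')
    simp only [LinearMap.comp_apply] at h2
    rw [h2, v.2 q q' h]⟩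
  map_add' := by
    intro u v
    apply Subtype.ext
    funext q
    simp
  map_smul' := by
    intro c v
    apply Subtype.ext
    funext q
    simp

/-
Write `M_{J,n} = ∏_{i∈J} ϖⁿO × ∏_{i∉J} O`. Then `M/M_{J,n} ≅ ⊕_{i∈J} O/ϖⁿ`, hence
`X ⊗ M/M_{J,n} ≅ ⊕_{i∈J} X/ϖⁿX`, via the coordinates `x ⊗ m ↦ mᵢx` and the inclusions
`y ↦ y ⊗ eᵢ`. Under these identifications the transition maps forget the coordinates outside `J`
and reduce modulo a smaller power of `ϖ`, so a compatible family is the same as a compatible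
sequence in `(X/ϖⁿX)ₙ` for every `i ∈ I`, i.e. an element of `∏_{i∈I} X̂`.
-/

namespace CompletedTensor

variable {O : Type*} [CommRing O] {ϖ : O} {I : Type*} {X : Type*} [AddCommGroup X] [Module O X]

theorem mem_MJn {q : Finset I × ℕ} {m : I → O} :
    m ∈ MJn O ϖ I q ↔ ∀ i ∈ q.1, m i ∈ Ideal.span {ϖ} ^ q.2 := by
  simp only [MJn, Submodule.mem_pi, Set.mem_univ, true_implies]
  refine forall_congr' fun i => ?_
  split_ifs with hi <;> simp [hi]

theorem singleton_le {i : I} {q : Finset I × ℕ} (hi : i ∈ q.1) : (({i}, q.2) : Finset I × ℕ) ≤ q :=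
  ⟨Finset.singleton_subset_iff.2 hi, le_rfl⟩

variable (ϖ) in
noncomputable def quotEval (i : I) (n : ℕ) :
    (I → O) ⧸ MJn O ϖ I ({i}, n) →ₗ[O] O ⧸ (Ideal.span {ϖ} ^ n : Ideal O) :=
  Submodule.liftQ _ ((Ideal.span {ϖ} ^ n : Ideal O).mkQ ∘ₗ LinearMap.proj i) fun m hm => by
    simpa [Ideal.Quotient.eq_zero_iff_mem] using mem_MJn.1 hm i (Finset.mem_singleton_self i)

variable (ϖ) in
noncomputable def quotSingle (i : I) (q : Finset I × ℕ) :
    O ⧸ (Ideal.span {ϖ} ^ q.2 : Ideal O) →ₗ[O] (I → O) ⧸ MJn O ϖ I q :=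
  Submodule.mapQ _ _ (LinearMap.single O (fun _ : I => O) i) fun a ha => by
    refine mem_MJn.2 fun j _ => ?_
    rcases eq_or_ne j i with rfl | hji
    · simpa using ha
    · simp [hji]

@[simp]
theorem quotEval_mk (i : I) (n : ℕ) (m : I → O) :
    quotEval ϖ i n (Submodule.Quotient.mk m) = Submodule.Quotient.mk (m i) := rfl

@[simp]
theorem quotSingle_mk (i : I) (q : Finset I × ℕ) (a : O) :
    quotSingle ϖ i q (Submodule.Quotient.mk a) = Submodule.Quotient.mk (Pi.single i a) := rfl

theorem mk_single_eq_zero {i : I} {q : Finset I × ℕ} (hi : i ∉ q.1) (a : O) :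
    (Submodule.Quotient.mk (Pi.single i a) : (I → O) ⧸ MJn O ϖ I q) = 0 := by
  refine (Submodule.Quotient.mk_eq_zero _).2 (mem_MJn.2 fun j hj => ?_)
  simp [show j ≠ i from fun h => hi (h ▸ hj)]

theorem mk_eq_sum_mk_single (q : Finset I × ℕ) (m : I → O) :
    (Submodule.Quotient.mk m : (I → O) ⧸ MJn O ϖ I q) =
      ∑ i ∈ q.1, Submodule.Quotient.mk (Pi.single i (m i)) := by
  simp_rw [← Submodule.mkQ_apply, ← map_sum, Submodule.mkQ_apply, Submodule.Quotient.eq]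
  refine mem_MJn.2 fun j hj => ?_
  simp [Finset.sum_apply, Pi.single_apply, hj]

variable (ϖ) in
noncomputable def quotTransition {q q' : Finset I × ℕ} (h : q ≤ q') :
    (I → O) ⧸ MJn O ϖ I q' →ₗ[O] (I → O) ⧸ MJn O ϖ I q :=
  Submodule.mapQ _ _ LinearMap.id fun _ hx => MJn_antitone O ϖ I h hx

theorem sum_quotSingle_quotEval (q : Finset I × ℕ) :
    ∑ i ∈ q.1.attach, quotSingle ϖ i.1 q ∘ₗ quotEval ϖ i.1 q.2 ∘ₗ
      quotTransition ϖ (singleton_le i.2) = LinearMap.id := by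
  refine LinearMap.ext fun y => ?_
  obtain ⟨m, rfl⟩ := Submodule.Quotient.mk_surjective _ y
  simp only [LinearMap.sum_apply, LinearMap.comp_apply, quotTransition, Submodule.mapQ_apply,
    LinearMap.id_apply, quotEval_mk, quotSingle_mk]
  rw [Finset.sum_attach q.1 fun i => Submodule.Quotient.mk (Pi.single i (m i)),
    mk_eq_sum_mk_single]

variable (ϖ X) in
noncomputable def tensorQuotEval (i : I) (n : ℕ) :
    X ⊗[O] ((I → O) ⧸ MJn O ϖ I ({i}, n)) →ₗ[O]
      X ⧸ (Ideal.span {ϖ} ^ n • ⊤ : Submodule O X) :=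
  (tensorQuotEquivQuotSMul X _).toLinearMap ∘ₗ (quotEval ϖ i n).lTensor X

variable (ϖ X) in
noncomputable def tensorQuotSingle (i : I) (q : Finset I × ℕ) :
    X ⧸ (Ideal.span {ϖ} ^ q.2 • ⊤ : Submodule O X) →ₗ[O]
      X ⊗[O] ((I → O) ⧸ MJn O ϖ I q) :=
  (quotSingle ϖ i q).lTensor X ∘ₗ (tensorQuotEquivQuotSMul X _).symm.toLinearMap

@[simp]
theorem tensorQuotEval_tmul_mk (i : I) (n : ℕ) (x : X) (m : I → O) :
    tensorQuotEval ϖ X i n (x ⊗ₜ Submodule.Quotient.mk m) = Submodule.Quotient.mk (m i • x) := by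
  simp [tensorQuotEval, Ideal.Quotient.mk_eq_mk]

@[simp]
theorem tensorQuotSingle_mk (i : I) (q : Finset I × ℕ) (y : X) :
    tensorQuotSingle ϖ X i q (Submodule.Quotient.mk y) =
      y ⊗ₜ Submodule.Quotient.mk (Pi.single i 1) := by
  simp only [tensorQuotSingle, LinearMap.comp_apply, LinearEquiv.coe_coe,
    tensorQuotEquivQuotSMul_symm_mk, LinearMap.lTensor_tmul]
  rfl

@[simp]
theorem ctransition_tmul_mk {q q' : Finset I × ℕ} (h : q ≤ q') (x : X) (m : I → O) :
    ctransition O ϖ I X h (x ⊗ₜ Submodule.Quotient.mk m) = x ⊗ₜ Submodule.Quotient.mk m :=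
  rfl

theorem tensorQuotEval_tensorQuotSingle (i : I) (n : ℕ)
    (y : X ⧸ (Ideal.span {ϖ} ^ n • ⊤ : Submodule O X)) :
    tensorQuotEval ϖ X i n (tensorQuotSingle ϖ X i ({i}, n) y) = y := by
  obtain ⟨y, rfl⟩ := Submodule.Quotient.mk_surjective _ y
  rw [tensorQuotSingle_mk, tensorQuotEval_tmul_mk, Pi.single_eq_same, one_smul]

theorem sum_tensorQuotSingle_tensorQuotEval (q : Finset I × ℕ) :
    ∑ i ∈ q.1.attach, tensorQuotSingle ϖ X i.1 q ∘ₗ tensorQuotEval ϖ X i.1 q.2 ∘ₗ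
      ctransition O ϖ I X (singleton_le i.2) = LinearMap.id := by
  have cancel (i : q.1) : tensorQuotSingle ϖ X i.1 q ∘ₗ tensorQuotEval ϖ X i.1 q.2 ∘ₗ
      ctransition O ϖ I X (singleton_le i.2) =
        (quotSingle ϖ i.1 q ∘ₗ quotEval ϖ i.1 q.2 ∘ₗ
          quotTransition ϖ (singleton_le i.2)).lTensor X := by
    refine LinearMap.ext fun w => ?_
    simp only [tensorQuotEval, tensorQuotSingle, ctransition, quotTransition,
      LinearMap.lTensor_comp, LinearMap.comp_apply, LinearEquiv.coe_coe,
      LinearEquiv.symm_apply_apply]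
  simp_rw [cancel, ← LinearMap.coe_lTensorHom, ← map_sum, sum_quotSingle_quotEval,
    LinearMap.coe_lTensorHom, LinearMap.lTensor_id]

theorem transitionMap_comp_tensorQuotEval (i : I) {m n : ℕ} (hmn : m ≤ n) :
    AdicCompletion.transitionMap (Ideal.span {ϖ}) X hmn ∘ₗ tensorQuotEval ϖ X i n =
      tensorQuotEval ϖ X i m ∘ₗ ctransition O ϖ I X (show (({i}, m) : Finset I × ℕ) ≤ ({i}, n)
        from ⟨le_rfl, hmn⟩) := by
  refine TensorProduct.ext' fun x y => ?_
  obtain ⟨y, rfl⟩ := Submodule.Quotient.mk_surjective _ y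
  simp

theorem ctransition_tensorQuotSingle (i : I) {q q' : Finset I × ℕ} (h : q ≤ q')
    (y : X ⧸ (Ideal.span {ϖ} ^ q'.2 • ⊤ : Submodule O X)) :
    ctransition O ϖ I X h (tensorQuotSingle ϖ X i q' y) =
      if i ∈ q.1 then tensorQuotSingle ϖ X i q (AdicCompletion.transitionMap _ X h.2 y) else 0 := by
  obtain ⟨y, rfl⟩ := Submodule.Quotient.mk_surjective _ y
  split_ifs with hi
  · simp
  · simp [mk_single_eq_zero hi]

variable (ϖ X) in
noncomputable def eval (q : Finset I × ℕ) :
    CompletedTensor O ϖ I X →ₗ[O] X ⊗[O] ((I → O) ⧸ MJn O ϖ I q) :=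
  LinearMap.proj q ∘ₗ (CompletedTensor O ϖ I X).subtype

theorem ctransition_comp_eval {q q' : Finset I × ℕ} (h : q ≤ q') :
    ctransition O ϖ I X h ∘ₗ eval ϖ X q' = eval ϖ X q :=
  LinearMap.ext fun v => v.2 q q' h

variable (ϖ I X) in
noncomputable def toPiAdicCompletion :
    CompletedTensor O ϖ I X →ₗ[O] I → AdicCompletion (Ideal.span {ϖ}) X :=
  LinearMap.pi fun i => AdicCompletion.lift _
    (fun n => tensorQuotEval ϖ X i n ∘ₗ eval ϖ X ({i}, n)) fun hmn => by
      rw [← LinearMap.comp_assoc, transitionMap_comp_tensorQuotEval, LinearMap.comp_assoc,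
        ctransition_comp_eval]

variable (ϖ I X) in
noncomputable def ofPiAdicCompletion :
    (I → AdicCompletion (Ideal.span {ϖ}) X) →ₗ[O] CompletedTensor O ϖ I X :=
  LinearMap.codRestrict _ (LinearMap.pi fun q => ∑ i ∈ q.1,
      tensorQuotSingle ϖ X i q ∘ₗ AdicCompletion.eval _ X q.2 ∘ₗ LinearMap.proj i)
    fun x q q' h => by
      simp [LinearMap.sum_apply, ctransition_tensorQuotSingle, Finset.sum_ite_mem,
        Finset.inter_eq_right.2 h.1]

@[simp]
theorem toPiAdicCompletion_apply_val (v : CompletedTensor O ϖ I X) (i : I) (n : ℕ) :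
    (toPiAdicCompletion ϖ I X v i).val n = tensorQuotEval ϖ X i n (v.1 ({i}, n)) :=
  rfl

@[simp]
theorem ofPiAdicCompletion_apply_coe (x : I → AdicCompletion (Ideal.span {ϖ}) X)
    (q : Finset I × ℕ) :
    (ofPiAdicCompletion ϖ I X x).1 q = ∑ i ∈ q.1, tensorQuotSingle ϖ X i q ((x i).val q.2) :=
  LinearMap.sum_apply _ _ _

theorem toPiAdicCompletion_comp_ofPiAdicCompletion :
    toPiAdicCompletion ϖ I X ∘ₗ ofPiAdicCompletion ϖ I X = LinearMap.id := by
  refine LinearMap.ext fun x => funext fun i => AdicCompletion.ext fun n => ?_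
  simpa using tensorQuotEval_tensorQuotSingle i n ((x i).val n)

theorem ofPiAdicCompletion_comp_toPiAdicCompletion :
    ofPiAdicCompletion ϖ I X ∘ₗ toPiAdicCompletion ϖ I X = LinearMap.id := by
  refine LinearMap.ext fun v => Subtype.ext (funext fun q => ?_)
  rw [LinearMap.comp_apply, LinearMap.id_apply, ofPiAdicCompletion_apply_coe]
  conv_rhs => rw [← LinearMap.id_apply (R := O) (v.1 q), ← sum_tensorQuotSingle_tensorQuotEval q]
  rw [LinearMap.sum_apply, ← Finset.sum_attach q.1]
  refine Finset.sum_congr rfl fun i _ => ?_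
  rw [toPiAdicCompletion_apply_val, LinearMap.comp_apply, LinearMap.comp_apply,
    v.2 _ _ (singleton_le i.2)]

variable (ϖ I X) in
noncomputable def equivPiAdicCompletion :
    CompletedTensor O ϖ I X ≃ₗ[O] (I → AdicCompletion (Ideal.span {ϖ}) X) :=
  LinearEquiv.ofLinearMap _ _ toPiAdicCompletion_comp_ofPiAdicCompletion
    ofPiAdicCompletion_comp_toPiAdicCompletion

end CompletedTensor

theorem completedTensor_iso_prod_adicCompletion (O : Type*) [CommRing O] (ϖ : O)
    (I : Type*) (X : Type*) [AddCommGroup X] [Module O X] :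
    Nonempty ((CompletedTensor O ϖ I X) ≃ₗ[O]
      (I → AdicCompletion (Ideal.span {ϖ}) X)) :=
  ⟨CompletedTensor.equivPiAdicCompletion ϖ I X⟩
end

section
/- Let M be a profinite flat O-module. The functor X ↦ X ⊗̂ M is exact on the category of ϖ-adically complete (and separated) O-modules. -/
open TensorProduct Classical

/-! ### Auxiliary material for the proof -/

section Aux

variable (O : Type*) [CommRing O] (ϖ : O) (I : Type*)

/-- The forward map `(I → O) ⧸ MJn q → (q.1 → O ⧸ ϖ^n)`. -/
noncomputable def fwdQ (q : Finset I × ℕ) :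
    ((I → O) ⧸ MJn O ϖ I q) →ₗ[O] (q.1 → O ⧸ (Ideal.span {ϖ} ^ q.2 : Ideal O)) :=
  Submodule.liftQ _
    (LinearMap.pi fun j : q.1 =>
      (Submodule.mkQ (Ideal.span {ϖ} ^ q.2 : Ideal O)).comp (LinearMap.proj (j : I)))
    (by
      intro m hm
      rw [MJn, Submodule.mem_pi] at hm
      rw [LinearMap.mem_ker]
      funext j
      have hmj := hm (j : I) (Set.mem_univ _)
      rw [if_pos j.2] at hmj
      show Submodule.Quotient.mk (m (j : I)) = 0
      rw [Submodule.Quotient.mk_eq_zero]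
      exact hmj)

theorem fwdQ_mk (q : Finset I × ℕ) (m : I → O) :
    fwdQ O ϖ I q (Submodule.Quotient.mk m) =
      fun j : q.1 => Submodule.Quotient.mk (m (j : I)) := rfl

theorem fwdQ_bijective (q : Finset I × ℕ) : Function.Bijective (fwdQ O ϖ I q) := by
  constructor
  · rw [← LinearMap.ker_eq_bot, fwdQ, Submodule.ker_liftQ_eq_bot]
    intro m hm
    rw [LinearMap.mem_ker] at hm
    rw [MJn, Submodule.mem_pi]
    intro i _
    by_cases hi : i ∈ q.1
    · rw [if_pos hi]
      have h1 := congr_fun hm ⟨i, hi⟩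
      have h2 : Submodule.Quotient.mk (m i) = (0 : O ⧸ (Ideal.span {ϖ} ^ q.2 : Ideal O)) := h1
      rwa [Submodule.Quotient.mk_eq_zero] at h2
    · rw [if_neg hi]; trivial
  · intro w
    have hrep : ∀ j : q.1, ∃ r : O, Submodule.Quotient.mk r = w j := fun j =>
      Submodule.Quotient.mk_surjective _ (w j)
    choose r hr using hrep
    refine ⟨Submodule.Quotient.mk (fun i => if h : i ∈ q.1 then r ⟨i, h⟩ else 0), ?_⟩
    rw [fwdQ_mk]
    funext j
    rw [dif_pos j.2, hr]

/-- The structural isomorphism `X ⊗ (I→O)/M_{J,n} ≃ (J → X/ϖⁿX)`. -/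
noncomputable def Estr (X : Type*) [AddCommGroup X] [Module O X] (q : Finset I × ℕ) :
    (X ⊗[O] ((I → O) ⧸ MJn O ϖ I q)) ≃ₗ[O]
      (q.1 → X ⧸ (Ideal.span {ϖ} ^ q.2 • ⊤ : Submodule O X)) :=
  (LinearEquiv.lTensor X
      (LinearEquiv.ofBijective (fwdQ O ϖ I q) (fwdQ_bijective O ϖ I q))) ≪≫ₗ
    TensorProduct.piRight O O X (fun _ : q.1 => O ⧸ (Ideal.span {ϖ} ^ q.2 : Ideal O)) ≪≫ₗ
    LinearEquiv.piCongrRight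
      (fun _ : q.1 => TensorProduct.tensorQuotEquivQuotSMul X (Ideal.span {ϖ} ^ q.2))

theorem Estr_tmul (X : Type*) [AddCommGroup X] [Module O X] (q : Finset I × ℕ)
    (x : X) (m : I → O) :
    Estr O ϖ I X q (x ⊗ₜ[O] Submodule.Quotient.mk m) =
      fun j : q.1 => Submodule.Quotient.mk ((m (j : I)) • x) := by
  funext j
  simp only [Estr, LinearEquiv.trans_apply, LinearEquiv.lTensor_tmul,
    LinearEquiv.ofBijective_apply, fwdQ_mk, TensorProduct.piRight_apply,
    TensorProduct.piRightHom_tmul, LinearEquiv.piCongrRight_apply]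
  exact TensorProduct.tensorQuotEquivQuotSMul_tmul_mk _ _ _

theorem smulTop_le_comap {X Y : Type*} [AddCommGroup X] [Module O X]
    [AddCommGroup Y] [Module O Y] (f : X →ₗ[O] Y) (J : Ideal O) :
    (J • ⊤ : Submodule O X) ≤ (J • ⊤ : Submodule O Y).comap f := by
  rw [← Submodule.map_le_iff_le_comap, Submodule.map_smul'']
  exact Submodule.smul_mono le_rfl le_top

theorem pow_smulTop_antitone {X : Type*} [AddCommGroup X] [Module O X]
    {m n : ℕ} (h : m ≤ n) :
    (Ideal.span {ϖ} ^ n • ⊤ : Submodule O X) ≤ (Ideal.span {ϖ} ^ m • ⊤ : Submodule O X) :=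
  Submodule.smul_mono (Ideal.pow_le_pow_right h) le_rfl

/-- The reduction map `(q'.1 → X/ϖ^{n'}X) → (q.1 → X/ϖⁿX)` for `q ≤ q'`. -/
noncomputable def red (X : Type*) [AddCommGroup X] [Module O X] {q q' : Finset I × ℕ}
    (h : q ≤ q') :
    (q'.1 → X ⧸ (Ideal.span {ϖ} ^ q'.2 • ⊤ : Submodule O X)) →ₗ[O]
      (q.1 → X ⧸ (Ideal.span {ϖ} ^ q.2 • ⊤ : Submodule O X)) :=
  LinearMap.pi fun j : q.1 =>
    (Submodule.mapQ _ _ LinearMap.id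
        (le_trans (pow_smulTop_antitone O ϖ h.2) (by rw [Submodule.comap_id]))).comp
      (LinearMap.proj (⟨(j : I), h.1 j.2⟩ : q'.1))

theorem red_apply (X : Type*) [AddCommGroup X] [Module O X] {q q' : Finset I × ℕ}
    (h : q ≤ q') (w : q'.1 → X ⧸ (Ideal.span {ϖ} ^ q'.2 • ⊤ : Submodule O X)) (j : q.1) :
    red O ϖ I X h w j =
      Submodule.mapQ _ _ LinearMap.id
        (le_trans (pow_smulTop_antitone O ϖ h.2) (by rw [Submodule.comap_id]))
        (w ⟨(j : I), h.1 j.2⟩) := rfl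

theorem red_mk (X : Type*) [AddCommGroup X] [Module O X] {q q' : Finset I × ℕ}
    (h : q ≤ q') (w : q'.1 → X) (j : q.1) :
    red O ϖ I X h (fun j' => Submodule.Quotient.mk (w j')) j =
      Submodule.Quotient.mk (w ⟨(j : I), h.1 j.2⟩) := by
  rw [red_apply, Submodule.mapQ_apply, LinearMap.id_apply]

theorem Estr_ctransition (X : Type*) [AddCommGroup X] [Module O X]
    {q q' : Finset I × ℕ} (h : q ≤ q') (v : X ⊗[O] ((I → O) ⧸ MJn O ϖ I q')) :
    Estr O ϖ I X q (ctransition O ϖ I X h v) = red O ϖ I X h (Estr O ϖ I X q' v) := by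
  induction v using TensorProduct.induction_on with
  | zero => simp
  | tmul x mq =>
      obtain ⟨m, rfl⟩ := Submodule.Quotient.mk_surjective _ mq
      rw [ctransition, LinearMap.lTensor_tmul, Submodule.mapQ_apply, LinearMap.id_apply,
        Estr_tmul, Estr_tmul]
      funext j
      rw [red_mk]
  | add a b ha hb => simp [ha, hb]

theorem Estr_rTensor {X Y : Type*} [AddCommGroup X] [Module O X] [AddCommGroup Y]
    [Module O Y] (f : X →ₗ[O] Y) (q : Finset I × ℕ) (v : X ⊗[O] ((I → O) ⧸ MJn O ϖ I q)) :
    Estr O ϖ I Y q (LinearMap.rTensor _ f v) =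
      fun j : q.1 =>
        Submodule.mapQ _ _ f (smulTop_le_comap O f _) (Estr O ϖ I X q v j) := by
  induction v using TensorProduct.induction_on with
  | zero =>
      rw [map_zero, map_zero, map_zero]
      funext j
      simp
  | tmul x mq =>
      obtain ⟨m, rfl⟩ := Submodule.Quotient.mk_surjective _ mq
      rw [LinearMap.rTensor_tmul, Estr_tmul, Estr_tmul]
      funext j
      rw [Submodule.mapQ_apply, map_smul]
  | add a b ha hb =>
      rw [map_add, map_add, map_add, ha, hb]
      funext j
      simp

variable {X : Type*} [AddCommGroup X] [Module O X]

/-- The comparison map `(I → X) → X ⊗̂ M`. -/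
noncomputable def phiFun (x : I → X) : CompletedTensor O ϖ I X :=
  ⟨fun q => (Estr O ϖ I X q).symm (fun j : q.1 => Submodule.Quotient.mk (x (j : I))), by
    intro q q' h
    apply (Estr O ϖ I X q).injective
    rw [Estr_ctransition, LinearEquiv.apply_symm_apply, LinearEquiv.apply_symm_apply]
    funext j
    rw [red_mk]⟩

theorem phiFun_injective [IsAdicComplete (Ideal.span {ϖ}) X] :
    Function.Injective (phiFun O ϖ I (X := X)) := by
  intro x x' hxx'
  funext i
  have key : ∀ n : ℕ, x i - x' i ∈ (Ideal.span {ϖ} ^ n • ⊤ : Submodule O X) := by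
    intro n
    have h1 := congr_arg Subtype.val hxx'
    have h2 := congr_fun h1 (⟨{i}, n⟩ : Finset I × ℕ)
    have h3 := congr_arg (Estr O ϖ I X (⟨{i}, n⟩ : Finset I × ℕ)) h2
    simp only [phiFun, LinearEquiv.apply_symm_apply] at h3
    have h4 := congr_fun h3 ⟨i, Finset.mem_singleton_self i⟩
    exact (Submodule.Quotient.eq _).mp h4
  have hz : ∀ n : ℕ, x i - x' i ≡ 0 [SMOD (Ideal.span {ϖ} ^ n • ⊤ : Submodule O X)] :=
    fun n => SModEq.zero.mpr (key n)
  exact sub_eq_zero.mp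
    ((IsAdicComplete.toIsHausdorff (I := Ideal.span {ϖ}) (M := X)).haus (x i - x' i) hz)

theorem phiFun_surjective [IsAdicComplete (Ideal.span {ϖ}) X] :
    Function.Surjective (phiFun O ϖ I (X := X)) := by
  intro v
  set w : ∀ q : Finset I × ℕ, (q.1 → X ⧸ (Ideal.span {ϖ} ^ q.2 • ⊤ : Submodule O X)) :=
    fun q => Estr O ϖ I X q (v.1 q) with hw
  have hcompat : ∀ (q q' : Finset I × ℕ) (h : q ≤ q'), red O ϖ I X h (w q') = w q := by
    intro q q' h
    rw [hw, ← Estr_ctransition, v.2 q q' h]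
  -- choose representatives of w at singletons
  have hrep : ∀ (i : I) (n : ℕ), ∃ r : X,
      Submodule.Quotient.mk r = w (⟨{i}, n⟩ : Finset I × ℕ) ⟨i, Finset.mem_singleton_self i⟩ :=
    fun i n => Submodule.Quotient.mk_surjective _ _
  choose r hr using hrep
  have hchain : ∀ i : I, ∀ {m n : ℕ}, m ≤ n →
      r i m ≡ r i n [SMOD (Ideal.span {ϖ} ^ m • ⊤ : Submodule O X)] := by
    intro i m n hmn
    have h : (⟨{i}, m⟩ : Finset I × ℕ) ≤ ⟨{i}, n⟩ := ⟨le_rfl, hmn⟩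
    have h2 := congr_fun (hcompat _ _ h) ⟨i, Finset.mem_singleton_self i⟩
    rw [← hr i m, red_apply] at h2
    have h3 : Submodule.mapQ _ _ LinearMap.id
        (le_trans (pow_smulTop_antitone O ϖ h.2) (by rw [Submodule.comap_id]))
        (Submodule.Quotient.mk (r i n)) = Submodule.Quotient.mk (r i m) := by
      rw [hr i n]; exact h2
    rw [Submodule.mapQ_apply, LinearMap.id_apply] at h3
    rw [SModEq.sub_mem]
    exact (Submodule.Quotient.eq _).mp h3.symm
  have hx : ∀ i : I, ∃ L : X, ∀ n : ℕ,
      r i n ≡ L [SMOD (Ideal.span {ϖ} ^ n • ⊤ : Submodule O X)] := by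
    intro i
    exact (IsAdicComplete.toIsPrecomplete (I := Ideal.span {ϖ}) (M := X)).prec
      (fun {m n} hmn => hchain i hmn)
  choose x hxspec using hx
  refine ⟨x, ?_⟩
  apply Subtype.ext
  funext q
  rw [phiFun]
  apply (Estr O ϖ I X q).injective
  rw [LinearEquiv.apply_symm_apply]
  show _ = w q
  funext j
  have h : (⟨{(j : I)}, q.2⟩ : Finset I × ℕ) ≤ q := by
    constructor
    · intro a ha
      rw [Finset.mem_singleton] at ha
      exact ha ▸ j.2
    · exact le_rfl
  have h2 := congr_fun (hcompat _ _ h) ⟨(j : I), Finset.mem_singleton_self _⟩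
  rw [← hr (j : I) q.2, red_apply] at h2
  obtain ⟨y, hy⟩ := Submodule.Quotient.mk_surjective _
    (w q (⟨(j : I), h.1 (Finset.mem_singleton_self _)⟩ : q.1))
  have h3 : Submodule.Quotient.mk y =
      (Submodule.Quotient.mk (r (j : I) q.2) :
        X ⧸ (Ideal.span {ϖ} ^ q.2 • ⊤ : Submodule O X)) := by
    rw [← h2, ← hy, Submodule.mapQ_apply, LinearMap.id_apply]
  have e1 : y - r (j : I) q.2 ∈ (Ideal.span {ϖ} ^ q.2 • ⊤ : Submodule O X) :=
    (Submodule.Quotient.eq _).mp h3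
  have e2 : r (j : I) q.2 - x (j : I) ∈ (Ideal.span {ϖ} ^ q.2 • ⊤ : Submodule O X) :=
    SModEq.sub_mem.mp (hxspec (j : I) q.2)
  have e3 : y - x (j : I) ∈ (Ideal.span {ϖ} ^ q.2 • ⊤ : Submodule O X) := by
    have := Submodule.add_mem _ e1 e2
    rwa [sub_add_sub_cancel] at this
  have e4 : x (j : I) - y ∈ (Ideal.span {ϖ} ^ q.2 • ⊤ : Submodule O X) := by
    have := Submodule.neg_mem _ e3
    rwa [neg_sub] at this
  have hfin : Submodule.Quotient.mk (x (j : I)) =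
      (Submodule.Quotient.mk y : X ⧸ (Ideal.span {ϖ} ^ q.2 • ⊤ : Submodule O X)) :=
    (Submodule.Quotient.eq _).mpr e4
  exact hfin.trans hy

theorem phiFun_natural {Y : Type*} [AddCommGroup Y] [Module O Y] (f : X →ₗ[O] Y)
    (x : I → X) :
    ctensorMap O ϖ I f (phiFun O ϖ I x) = phiFun O ϖ I (fun i => f (x i)) := by
  apply Subtype.ext
  funext q
  show LinearMap.rTensor _ f ((phiFun O ϖ I x).1 q) = _
  apply (Estr O ϖ I Y q).injective
  rw [Estr_rTensor]
  rw [phiFun, phiFun]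
  simp only [LinearEquiv.apply_symm_apply]
  funext j
  rw [Submodule.mapQ_apply]

end Aux

/-!
STATEMENT 5: Let `M` be a profinite flat `O`-module (realized, via the structure theorem and a
pseudobasis indexed by `I`, as `M = I → O`).  The functor `X ↦ X ⊗̂ M` is exact on the
category of `ϖ`-adically complete (and separated) `O`-modules: given a short exact sequence
`0 → X → Y → Z → 0` of `ϖ`-adically complete `O`-modules, the induced sequence
`0 → X ⊗̂ M → Y ⊗̂ M → Z ⊗̂ M → 0` is exact.
-/
theorem completedTensor_exact (O : Type*) [CommRing O] (ϖ : O) (I : Type*)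
    {X Y Z : Type*} [AddCommGroup X] [Module O X] [AddCommGroup Y] [Module O Y]
    [AddCommGroup Z] [Module O Z]
    [IsAdicComplete (Ideal.span {ϖ}) X] [IsAdicComplete (Ideal.span {ϖ}) Y]
    [IsAdicComplete (Ideal.span {ϖ}) Z]
    (f : X →ₗ[O] Y) (g : Y →ₗ[O] Z)
    (hf : Function.Injective f) (hfg : Function.Exact f g) (hg : Function.Surjective g) :
    Function.Injective (ctensorMap O ϖ I f) ∧
      Function.Exact (ctensorMap O ϖ I f) (ctensorMap O ϖ I g) ∧
      Function.Surjective (ctensorMap O ϖ I g) := by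
  refine ⟨?_, ?_, ?_⟩
  · -- injectivity
    intro a b hab
    obtain ⟨xa, rfl⟩ := phiFun_surjective O ϖ I a
    obtain ⟨xb, rfl⟩ := phiFun_surjective O ϖ I b
    rw [phiFun_natural, phiFun_natural] at hab
    have := phiFun_injective O ϖ I hab
    have h2 : xa = xb := by
      funext i
      exact hf (congr_fun this i)
    rw [h2]
  · -- exactness
    intro b
    obtain ⟨y, rfl⟩ := phiFun_surjective O ϖ I b
    rw [phiFun_natural]
    constructor
    · intro h0
      have hz : (fun i => g (y i)) = 0 := by
        have hphi0 : phiFun O ϖ I (0 : I → Z) = (0 : CompletedTensor O ϖ I Z) := by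
          apply Subtype.ext
          funext q
          show (Estr O ϖ I Z q).symm _ = 0
          rw [show (fun j : q.1 => Submodule.Quotient.mk ((0 : I → Z) (j : I))) =
            (0 : q.1 → Z ⧸ (Ideal.span {ϖ} ^ q.2 • ⊤ : Submodule O Z)) from rfl, map_zero]
        apply phiFun_injective O ϖ I
        rw [h0, hphi0]
      have hx : ∀ i : I, ∃ xi : X, f xi = y i := by
        intro i
        have : g (y i) = 0 := congr_fun hz i
        exact (hfg (y i)).mp this
      choose x hxspec using hx
      refine ⟨phiFun O ϖ I x, ?_⟩
      rw [phiFun_natural]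
      congr 1
      funext i
      exact hxspec i
    · rintro ⟨a, ha⟩
      obtain ⟨xa, rfl⟩ := phiFun_surjective O ϖ I a
      rw [phiFun_natural] at ha
      have hy : (fun i => f (xa i)) = y := phiFun_injective O ϖ I ha
      have hz : (fun i => g (y i)) = (0 : I → Z) := by
        funext i
        rw [← congr_fun hy i]
        exact hfg.apply_apply_eq_zero (xa i)
      rw [hz]
      apply Subtype.ext
      funext q
      show (Estr O ϖ I Z q).symm _ = 0
      rw [show (fun j : q.1 => Submodule.Quotient.mk ((0 : I → Z) (j : I))) =
        (0 : q.1 → Z ⧸ (Ideal.span {ϖ} ^ q.2 • ⊤ : Submodule O Z)) from rfl, map_zero]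
  · -- surjectivity
    intro c
    obtain ⟨z, rfl⟩ := phiFun_surjective O ϖ I c
    have hy : ∀ i : I, ∃ yi : Y, g yi = z i := fun i => hg (z i)
    choose y hyspec using hy
    refine ⟨phiFun O ϖ I y, ?_⟩
    rw [phiFun_natural]
    congr 1
    funext i
    exact hyspec i
end

section
/- Let 0 → X → Y → Q → 0 be an exact sequence of O-modules where X is ϖ-adically complete and separated, and Q is killed by ϖ^N for some integer N ≥ 0. Then Y is ϖ-adically complete and separated, and for any profinite flat O-module M, the natural map (X ⊗̂ M)[1/ϖ] → (Y ⊗̂ M)[1/ϖ] is an isomorphism. -/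
open TensorProduct Classical

lemma mem_span_pow_smul {O M : Type*} [CommRing O] [AddCommGroup M] [Module O M]
    (ϖ : O) (n : ℕ) (x : M) :
    x ∈ (Ideal.span {ϖ} ^ n • ⊤ : Submodule O M) ↔ ∃ y : M, ϖ ^ n • y = x := by
  rw [Ideal.span_singleton_pow]
  constructor
  · intro hx
    refine Submodule.smul_induction_on hx ?_ ?_
    · intro r hr m _
      obtain ⟨c, rfl⟩ := Ideal.mem_span_singleton'.mp hr
      exact ⟨c • m, by rw [smul_smul, mul_comm]⟩
    · rintro x y ⟨a, rfl⟩ ⟨b, rfl⟩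
      exact ⟨a + b, by rw [smul_add]⟩
  · rintro ⟨y, rfl⟩
    exact Submodule.smul_mem_smul (Ideal.mem_span_singleton_self _) Submodule.mem_top

/-!
STATEMENT 6: Let `0 → X → Y → Q → 0` be an exact sequence of `O`-modules where `X` is
`ϖ`-adically complete and separated, and `Q` is killed by `ϖ^N` for some integer `N ≥ 0`.
Then `Y` is `ϖ`-adically complete and separated, and for any profinite flat `O`-module `M`
(realized via a pseudobasis as `M = I → O`), the natural map
`(X ⊗̂ M)[1/ϖ] → (Y ⊗̂ M)[1/ϖ]` is an isomorphism.  Inverting `ϖ` is realized by localizing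
at the powers of `ϖ`.
-/
theorem completedTensor_bounded_torsion_quotient (O : Type*) [CommRing O] (ϖ : O)
    (I : Type*)
    {X Y Q : Type*} [AddCommGroup X] [Module O X] [AddCommGroup Y] [Module O Y]
    [AddCommGroup Q] [Module O Q]
    [IsAdicComplete (Ideal.span {ϖ}) X]
    (f : X →ₗ[O] Y) (g : Y →ₗ[O] Q)
    (hf : Function.Injective f) (hfg : Function.Exact f g) (hg : Function.Surjective g)
    (N : ℕ) (hQ : ∀ x : Q, ϖ ^ N • x = 0) :
    IsAdicComplete (Ideal.span {ϖ}) Y ∧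
      Function.Bijective
        (LocalizedModule.map (Submonoid.powers ϖ) (ctensorMap O ϖ I f)) := by
  -- Construct the retraction `h : Y → X` with `f ∘ h = ϖ^N` and `h ∘ f = ϖ^N`.
  have key : ∀ y : Y, ∃ x : X, f x = ϖ ^ N • y := by
    intro y
    have h0 : g (ϖ ^ N • y) = 0 := by rw [map_smul, hQ]
    exact (hfg (ϖ ^ N • y)).mp h0
  choose hx hx_spec using key
  have hL : ∃ h : Y →ₗ[O] X, ∀ y, f (h y) = ϖ ^ N • y := by
    refine ⟨⟨⟨hx, ?_⟩, ?_⟩, hx_spec⟩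
    · intro a b
      apply hf
      rw [map_add, hx_spec, hx_spec, hx_spec, smul_add]
    · intro r a
      apply hf
      simp only [RingHom.id_apply, map_smul, hx_spec]
      rw [smul_comm]
  obtain ⟨h, hfh⟩ := hL
  have hhf : ∀ x : X, h (f x) = ϖ ^ N • x := by
    intro x
    apply hf
    rw [hfh, map_smul]
  constructor
  · -- `Y` is adically complete.
    refine { toIsHausdorff := ⟨?_⟩, toIsPrecomplete := ⟨?_⟩ }
    · -- Hausdorff
      intro y hy
      have hmem : ∀ n : ℕ, ∃ z : Y, ϖ ^ n • z = y := by
        intro n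
        have := (SModEq.sub_mem.mp (hy n))
        rw [sub_zero] at this
        exact (mem_span_pow_smul ϖ n y).mp this
      obtain ⟨z0, hz0⟩ := hmem N
      have hgy : g y = 0 := by rw [← hz0, map_smul, hQ]
      obtain ⟨x, hxy⟩ := (hfg y).mp hgy
      have hx0 : x = 0 := by
        refine IsHausdorff.haus (inferInstance : IsHausdorff (Ideal.span {ϖ}) X) x ?_
        intro n
        rw [SModEq.sub_mem, sub_zero, mem_span_pow_smul]
        obtain ⟨z, hz⟩ := hmem (n + N)
        refine ⟨h z, ?_⟩
        apply hf
        rw [hxy, map_smul, hfh, ← hz, pow_add, smul_smul, mul_comm]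
      rw [← hxy, hx0, map_zero]
    · -- Precomplete
      intro c hc
      have dif : ∀ n : ℕ, ∃ w : Y, ϖ ^ N • w = c (n + N) - c N := by
        intro n
        have h1 : c N - c (n + N) ∈ (Ideal.span {ϖ} ^ N • ⊤ : Submodule O Y) :=
          SModEq.sub_mem.mp (hc (Nat.le_add_left N n))
        have h2 : c (n + N) - c N ∈ (Ideal.span {ϖ} ^ N • ⊤ : Submodule O Y) := by
          rw [← neg_sub]
          exact Submodule.neg_mem _ h1
        exact (mem_span_pow_smul ϖ N _).mp h2
      choose d hd using dif
      set xs : ℕ → X := fun n => h (d n) with hxs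
      have hfxs : ∀ n, f (xs n) = c (n + N) - c N := by
        intro n
        rw [hxs]
        simp only [hfh, hd]
      have hcomp : ∀ {m n : ℕ}, m ≤ n →
          xs m ≡ xs n [SMOD (Ideal.span {ϖ} ^ m • ⊤ : Submodule O X)] := by
        intro m n hmn
        rw [SModEq.sub_mem, mem_span_pow_smul]
        have h1 : c (m + N) - c (n + N) ∈ (Ideal.span {ϖ} ^ (m + N) • ⊤ : Submodule O Y) :=
          SModEq.sub_mem.mp (hc (Nat.add_le_add_right hmn N))
        obtain ⟨z, hz⟩ := (mem_span_pow_smul ϖ (m + N) _).mp h1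
        refine ⟨h z, ?_⟩
        apply hf
        rw [map_sub, hfxs, hfxs, map_smul, hfh, smul_smul, ← pow_add, hz]
        abel
      obtain ⟨L, hLs⟩ := IsPrecomplete.prec
        (inferInstance : IsPrecomplete (Ideal.span {ϖ}) X) @hcomp
      refine ⟨f L + c N, ?_⟩
      intro n
      rw [SModEq.sub_mem]
      have e1 : c n - (f L + c N) = (c n - c (n + N)) + f (xs n - L) := by
        rw [map_sub, hfxs]
        abel
      rw [e1]
      refine Submodule.add_mem _ (SModEq.sub_mem.mp (hc (Nat.le_add_right n N))) ?_
      obtain ⟨z, hz⟩ := (mem_span_pow_smul ϖ n _).mp (SModEq.sub_mem.mp (hLs n))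
      rw [mem_span_pow_smul]
      exact ⟨f z, by rw [← map_smul, hz]⟩
  · -- The localized map is bijective.
    have HF : ∀ v : CompletedTensor O ϖ I X,
        ctensorMap O ϖ I h (ctensorMap O ϖ I f v) = (ϖ ^ N : O) • v := by
      intro v
      apply Subtype.ext
      funext q
      show LinearMap.rTensor _ h (LinearMap.rTensor _ f (v.1 q)) = ϖ ^ N • v.1 q
      have key2 : ∀ t : X ⊗[O] ((I → O) ⧸ MJn O ϖ I q),
          LinearMap.rTensor _ h (LinearMap.rTensor _ f t) = ϖ ^ N • t := by
        intro t
        induction t using TensorProduct.induction_on with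
        | zero => simp
        | tmul x p => simp [LinearMap.rTensor_tmul, hhf, TensorProduct.smul_tmul']
        | add a b ha hb => simp only [map_add, ha, hb, smul_add]
      exact key2 _
    have FH : ∀ v : CompletedTensor O ϖ I Y,
        ctensorMap O ϖ I f (ctensorMap O ϖ I h v) = (ϖ ^ N : O) • v := by
      intro v
      apply Subtype.ext
      funext q
      show LinearMap.rTensor _ f (LinearMap.rTensor _ h (v.1 q)) = ϖ ^ N • v.1 q
      have key2 : ∀ t : Y ⊗[O] ((I → O) ⧸ MJn O ϖ I q),
          LinearMap.rTensor _ f (LinearMap.rTensor _ h t) = ϖ ^ N • t := by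
        intro t
        induction t using TensorProduct.induction_on with
        | zero => simp
        | tmul x p => simp [LinearMap.rTensor_tmul, hfh, TensorProduct.smul_tmul']
        | add a b ha hb => simp only [map_add, ha, hb, smul_add]
      exact key2 _
    set S := Submonoid.powers ϖ
    have hπN : ϖ ^ N ∈ S := ⟨N, rfl⟩
    set πN : S := ⟨ϖ ^ N, hπN⟩ with hπNdef
    constructor
    · -- injective
      intro a b hab
      induction a, b using LocalizedModule.induction_on₂ with
      | _ w w' s s' =>
        rw [LocalizedModule.map_mk, LocalizedModule.map_mk, LocalizedModule.mk_eq] at hab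
        obtain ⟨u, hu⟩ := hab
        rw [LocalizedModule.mk_eq]
        refine ⟨u * πN, ?_⟩
        have h2 := congrArg (ctensorMap O ϖ I h) hu
        simp only [Submonoid.smul_def, map_smul, HF] at h2
        simp only [Submonoid.smul_def, Submonoid.coe_mul, hπNdef, mul_smul]
        rw [smul_comm (ϖ ^ N) ((s' : O)), smul_comm (ϖ ^ N) ((s : O))]
        exact h2
    · -- surjective
      intro b
      induction b using LocalizedModule.induction_on with
      | _ w s =>
        refine ⟨LocalizedModule.mk (ctensorMap O ϖ I h w) (πN * s), ?_⟩
        rw [LocalizedModule.map_mk, FH w]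
        show LocalizedModule.mk (πN • w) (πN * s) = _
        exact LocalizedModule.mk_cancel_common_left πN s w
end
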